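/- arXiv:2503.01388 — 3 statements merged into one kernel-verified Lean document; each statement's English description precedes it below -/
import Mathlib

section
/- Let k ≥ 1 be an integer and let S be a string of length L over an alphabet Σ. Let Q1 and Q2 be primitive strings with 50k·|Q1| < L and 50k·|Q2| < L, and suppose there exist nonnegative integers α1 and α2 such that δ_H(S, Q1^∞[α1..α1+L)) ≤ 3k and δ_H(S, Q2^∞[α2..α2+L)) ≤ 3k. Then Q1 and Q2 are cyclically equivalent. -/
/-- Mismatch positions of two (equal-length) strings:
`Mis(X,Y) = {i : X[i] ≠ Y[i]}`. -/
def mis {α : Type*} [DecidableEq α] [Inhabited α] (X Y : List α) : Finset ℕ :=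
  (Finset.range (min X.length Y.length)).filter (fun i => X.getD i default ≠ Y.getD i default)

/-- Hamming distance of two (equal-length) strings: the number of mismatch positions. -/
def hdist {α : Type*} [DecidableEq α] [Inhabited α] (X Y : List α) : ℕ := (mis X Y).card

/-- The fragment `S[x..x+L)`. -/
def frag {α : Type*} (S : List α) (x L : ℕ) : List α := (S.drop x).take L

/-- `Q^∞[a..a+L)`: the string of length `L` whose `i`-th character is `Q[(a+i) mod |Q|]`. -/
def qinf {α : Type*} [Inhabited α] (Q : List α) (a L : ℕ) : List α :=
  (List.range L).map (fun i => Q.getD ((a + i) % Q.length) default)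

/-- A nonempty string is primitive if it is not of the form `Y^h` with `h ≥ 2`. -/
def Primitive {α : Type*} (Q : List α) : Prop :=
  Q ≠ [] ∧ ∀ (Y : List α) (h : ℕ), 2 ≤ h → Q ≠ (List.replicate h Y).flatten


/-- `f` has period `p` on the window `[0, n]` (indices up to `n`). -/
def Per {α : Type*} (f : ℕ → α) (p n : ℕ) : Prop := ∀ i, i + p ≤ n → f (i + p) = f i

lemma Per.mono {α : Type*} {f : ℕ → α} {p n m : ℕ} (h : Per f p n) (hmn : m ≤ n) :
    Per f p m := fun i hi => h i (le_trans hi hmn)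

lemma fine_wilf_aux {α : Type*} (N : ℕ) : ∀ p q ℓ (f : ℕ → α), p + q ≤ N → 0 < p → 0 < q →
    Per f p (ℓ + p + q) → Per f q (ℓ + p + q) → Per f (Nat.gcd p q) (ℓ + 2 * Nat.gcd p q) := by
  induction N with
  | zero => intro p q ℓ f hN hp hq _ _; omega
  | succ N IH =>
    intro p q ℓ f hN hp hq hPp hPq
    rcases lt_trichotomy p q with hlt | heq | hgt
    · -- q = p + d, d > 0
      obtain ⟨d, rfl⟩ : ∃ d, q = p + d := ⟨q - p, by omega⟩
      have hd : 0 < d := by omega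
      have hg : Nat.gcd p (p + d) = Nat.gcd p d := by
        rw [show p + d = d + p by omega, Nat.gcd_add_self_right]
      rw [hg]
      have hPp' : Per f p (ℓ + p + d) := hPp.mono (by omega)
      have hPd : Per f d (ℓ + p + d) := by
        intro i hi
        have e1 : f (i + d + p) = f (i + d) := hPp (i + d) (by omega)
        have e2 : f (i + (p + d)) = f i := hPq i (by omega)
        have : i + d + p = i + (p + d) := by omega
        rw [this] at e1
        rw [← e1, e2]
      exact IH p d ℓ f (by omega) hp hd hPp' hPd
    · subst heq
      rw [Nat.gcd_self]
      exact hPp.mono (by omega)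
    · obtain ⟨d, rfl⟩ : ∃ d, p = q + d := ⟨p - q, by omega⟩
      have hd : 0 < d := by omega
      have hg : Nat.gcd (q + d) q = Nat.gcd d q := by
        rw [show q + d = d + q by omega, Nat.gcd_add_self_left]
      rw [hg, Nat.gcd_comm]
      have hPq' : Per f q (ℓ + q + d) := hPq.mono (by omega)
      have hPd : Per f d (ℓ + q + d) := by
        intro i hi
        have e1 : f (i + d + q) = f (i + d) := hPq (i + d) (by omega)
        have e2 : f (i + (q + d)) = f i := hPp i (by omega)
        have : i + d + q = i + (q + d) := by omega
        rw [this] at e1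
        rw [← e1, e2]
      exact IH q d ℓ f (by omega) hq hd hPq' hPd


lemma gap_lemma (M : Finset ℕ) (m t L : ℕ) (hcard : M.card ≤ m)
    (hL : (m + 1) * t ≤ L) :
    ∃ x, x + t ≤ L ∧ ∀ i, x ≤ i → i < x + t → i ∉ M := by
  by_contra hcon
  push_neg at hcon
  have hex : ∀ j, j < m + 1 → ∃ i, j * t ≤ i ∧ i < j * t + t ∧ i ∈ M := by
    intro j hj
    have : j * t + t ≤ L := by
      calc j * t + t = (j + 1) * t := by ring
        _ ≤ (m + 1) * t := by exact Nat.mul_le_mul_right t (by omega)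
        _ ≤ L := hL
    exact hcon (j * t) this
  classical
  set F : ℕ → ℕ := fun j => if hj : j < m + 1 then (hex j hj).choose else 0 with hF
  have hFspec : ∀ j, j < m + 1 → j * t ≤ F j ∧ F j < j * t + t ∧ F j ∈ M := by
    intro j hj
    simp only [hF, dif_pos hj]
    exact (hex j hj).choose_spec
  have hdiv : ∀ j, j < m + 1 → F j / t = j := by
    intro j hj
    obtain ⟨h1, h2, _⟩ := hFspec j hj
    exact Nat.div_eq_of_lt_le h1 (by rw [add_mul, one_mul]; omega)
  have hinj : Set.InjOn F (Finset.range (m + 1)) := by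
    intro a ha b hb hab
    simp only [Finset.coe_range, Set.mem_Iio] at ha hb
    rw [← hdiv a ha, ← hdiv b hb, hab]
  have := Finset.card_le_card_of_injOn F
    (fun a ha => (hFspec a (Finset.mem_range.mp ha)).2.2) hinj
  rw [Finset.card_range] at this
  omega






lemma length_flatten_replicate {α : Type*} (W : List α) (h : ℕ) :
    (List.replicate h W).flatten.length = h * W.length := by
  induction h with
  | zero => simp
  | succ n ih => simp [List.replicate_succ, ih]; ring

lemma getD_flatten_replicate {α : Type*} [Inhabited α] (W : List α) (h i : ℕ)
    (hi : i < h * W.length) :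
    ((List.replicate h W).flatten).getD i default = W.getD (i % W.length) default := by
  induction h generalizing i with
  | zero => omega
  | succ n ih =>
    rw [List.replicate_succ, List.flatten_cons]
    rcases lt_or_ge i W.length with hlt | hge
    · rw [List.getD_append _ _ _ _ hlt, Nat.mod_eq_of_lt hlt]
    · rw [List.getD_append_right _ _ _ _ hge, Nat.mod_eq_sub_mod hge]
      exact ih (i - W.length) (by rw [Nat.succ_mul] at hi; omega)

lemma periodic_eq_flatten {α : Type*} [Inhabited α] (Q : List α) (g : ℕ) (hg : 0 < g)
    (hdvd : g ∣ Q.length)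
    (hper : ∀ j, j + g < Q.length → Q.getD (j + g) default = Q.getD j default) :
    Q = (List.replicate (Q.length / g) (Q.take g)).flatten := by
  have hgle : g ≤ Q.length ∨ Q.length = 0 := by
    rcases Nat.eq_zero_or_pos Q.length with h0 | hpos
    · right; exact h0
    · left; exact Nat.le_of_dvd hpos hdvd
  rcases hgle with hgle | h0
  swap
  · have : Q = [] := List.length_eq_zero_iff.mp h0
    simp [this, h0]
  have htake : (Q.take g).length = g := by simp [hgle]
  have hmod : ∀ i, i < Q.length → Q.getD i default = Q.getD (i % g) default := by
    intro i
    induction i using Nat.strong_induction_on with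
    | _ i ih =>
      intro hi
      rcases lt_or_ge i g with hlt | hge
      · rw [Nat.mod_eq_of_lt hlt]
      · have e := hper (i - g) (by omega)
        rw [show i - g + g = i by omega] at e
        rw [e, ih (i - g) (by omega) (by omega), Nat.mod_eq_sub_mod hge]
  have hlen : ((List.replicate (Q.length / g) (Q.take g)).flatten).length = Q.length := by
    rw [length_flatten_replicate, htake, Nat.div_mul_cancel hdvd]
  apply List.ext_getElem (by omega)
  intro n h1 h2
  rw [← List.getD_eq_getElem _ default h1, ← List.getD_eq_getElem _ default h2,
    getD_flatten_replicate _ _ _ (by rw [htake, Nat.div_mul_cancel hdvd]; omega),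
    htake, hmod n h1]
  have : n % g < g := Nat.mod_lt _ hg
  rw [List.getD_eq_getElem (Q.take g) default (by omega),
    List.getD_eq_getElem Q default (by omega : n % g < Q.length)]
  simp [List.getElem_take]

/-- If the rotated view of a primitive `Q` has period `g ∣ |Q|` on a window of length
`|Q| + g`, then `|Q| = g`. -/
lemma rot_periodic_prim {α : Type*} [Inhabited α] (Q : List α) (hQ : Primitive Q) (b g : ℕ)
    (hg : 0 < g) (hdvd : g ∣ Q.length)
    (hPer : Per (fun i => Q.getD ((b + i) % Q.length) default) g (Q.length + g)) :
    Q.length = g := by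
  set p := Q.length with hpdef
  have hp : 0 < p := List.length_pos_iff.mpr hQ.1
  set A : ℕ → α := fun i => Q.getD ((b + i) % p) default with hAdef
  have hAcong : ∀ m n, m % p = n % p → A m = A n := by
    intro m n h
    simp only [hAdef]
    congr 1
    rw [Nat.add_mod b m, h, ← Nat.add_mod]
  have hAval : ∀ i, A i = Q.getD ((b + i) % p) default := fun i => rfl
  set r := b % p with hrdef
  set c := b / p with hcdef
  have hcp : p * c + r = b := Nat.div_add_mod b p
  have hrp : r < p := Nat.mod_lt _ hp
  have hQper : ∀ j, j + g < p → Q.getD (j + g) default = Q.getD j default := by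
    intro j hjg
    have hj : j < p := by omega
    have e1 : A (p - r + j) = Q.getD j default := by
      rw [hAval]
      congr 1
      have hb : b + (p - r + j) = p * (c + 1) + j := by
        have h2 : p * (c + 1) = p * c + p := by ring
        omega
      rw [hb, Nat.mul_add_mod, Nat.mod_eq_of_lt hj]
    have e2 : A (p - r + j + g) = Q.getD (j + g) default := by
      rw [hAval]
      congr 1
      have hb : b + (p - r + j + g) = p * (c + 1) + (j + g) := by
        have h2 : p * (c + 1) = p * c + p := by ring
        omega
      rw [hb, Nat.mul_add_mod, Nat.mod_eq_of_lt hjg]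
    have hmm : (p - r + j) % p < p := Nat.mod_lt _ hp
    have key : A ((p - r + j) % p + g) = A ((p - r + j) % p) := hPer _ (by omega)
    have c1 : A ((p - r + j) % p + g) = A (p - r + j + g) :=
      hAcong _ _ (Nat.mod_add_mod (p - r + j) p g)
    have c2 : A ((p - r + j) % p) = A (p - r + j) :=
      hAcong _ _ (Nat.mod_mod_of_dvd _ dvd_rfl)
    rw [← e2, ← e1, ← c1, ← c2, key]
  have hflat := periodic_eq_flatten Q g hg hdvd hQper
  by_contra hne
  have hgle : g ≤ p := Nat.le_of_dvd hp hdvd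
  have h2 : 2 ≤ p / g := by
    rcases Nat.lt_or_ge (p / g) 2 with hlt | hge
    · exfalso
      have := Nat.mul_div_cancel' hdvd
      interval_cases h : p / g
      · omega
      · omega
    · exact hge
  exact hQ.2 (Q.take g) (p / g) h2 hflat




lemma qinf_length {α : Type*} [Inhabited α] (Q : List α) (a L : ℕ) :
    (qinf Q a L).length = L := by simp [qinf]

lemma qinf_getD {α : Type*} [Inhabited α] (Q : List α) (a L j : ℕ) (hj : j < L) :
    (qinf Q a L).getD j default = Q.getD ((a + j) % Q.length) default := by
  rw [List.getD_eq_getElem _ default (by rw [qinf_length]; exact hj)]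
  simp [qinf]

lemma notMem_mis {α : Type*} [DecidableEq α] [Inhabited α] {X Y : List α} {i : ℕ}
    (hiX : i < X.length) (hiY : i < Y.length) (h : i ∉ mis X Y) :
    X.getD i default = Y.getD i default := by
  by_contra hne
  exact h (Finset.mem_filter.mpr ⟨Finset.mem_range.mpr (lt_min hiX hiY), hne⟩)

/-- If a string `S` of length `L` is within Hamming distance `3k` of shifts of the infinite
powers of two primitive strings `Q1`, `Q2` with `50k·|Q1| < L` and `50k·|Q2| < L`, then
`Q1` and `Q2` are cyclically equivalent. -/
theorem stmt0 {α : Type*} [DecidableEq α] [Inhabited α]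
    (k : ℕ) (hk : 1 ≤ k) (L : ℕ) (S Q1 Q2 : List α) (hS : S.length = L)
    (hQ1 : Primitive Q1) (hQ2 : Primitive Q2)
    (h1 : 50 * k * Q1.length < L) (h2 : 50 * k * Q2.length < L)
    (hp1 : ∃ α1 : ℕ, hdist S (qinf Q1 α1 L) ≤ 3 * k)
    (hp2 : ∃ α2 : ℕ, hdist S (qinf Q2 α2 L) ≤ 3 * k) :
    ∃ U V : List α, Q1 = U ++ V ∧ Q2 = V ++ U := by
  obtain ⟨α1, hd1⟩ := hp1
  obtain ⟨α2, hd2⟩ := hp2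
  set p := Q1.length with hpdef
  set q := Q2.length with hqdef
  have hp : 0 < p := List.length_pos_iff.mpr hQ1.1
  have hq : 0 < q := List.length_pos_iff.mpr hQ2.1
  set T1 := qinf Q1 α1 L with hT1def
  set T2 := qinf Q2 α2 L with hT2def
  have hT1 : T1.length = L := qinf_length _ _ _
  have hT2 : T2.length = L := qinf_length _ _ _
  set M := mis S T1 ∪ mis S T2 with hM
  have hcard : M.card ≤ 6 * k := by
    calc M.card ≤ (mis S T1).card + (mis S T2).card := Finset.card_union_le _ _
      _ ≤ 3 * k + 3 * k := Nat.add_le_add hd1 hd2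
      _ = 6 * k := by ring
  have e1 : 50 * (k * p) < L := by
    calc 50 * (k * p) = 50 * k * p := by ring
      _ < L := h1
  have e2 : 50 * (k * q) < L := by
    calc 50 * (k * q) = 50 * k * q := by ring
      _ < L := h2
  have harith : (6 * k + 1) * (2 * (p + q) + 1) ≤ L := by
    have hA : (6 * k + 1) * (2 * (p + q) + 1) ≤ (7 * k) * (3 * (p + q)) :=
      Nat.mul_le_mul (by omega) (by omega)
    have hB : (7 * k) * (3 * (p + q)) = 21 * (k * p) + 21 * (k * q) := by ring
    omega
  obtain ⟨x, hxL, hfree⟩ := gap_lemma M (6 * k) (2 * (p + q) + 1) L hcard harith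
  set A : ℕ → α := fun i => Q1.getD ((α1 + x + i) % p) default with hAdef
  set B : ℕ → α := fun i => Q2.getD ((α2 + x + i) % q) default with hBdef
  have hAval : ∀ i, A i = Q1.getD ((α1 + x + i) % p) default := fun i => rfl
  have hBval : ∀ i, B i = Q2.getD ((α2 + x + i) % q) default := fun i => rfl
  have hAT : ∀ j, x + j < L → A j = T1.getD (x + j) default := by
    intro j hj
    rw [hT1def, qinf_getD Q1 α1 L (x + j) hj, hAval, ← hpdef, show α1 + (x + j) = α1 + x + j by ring]
  have hBT : ∀ j, x + j < L → B j = T2.getD (x + j) default := by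
    intro j hj
    rw [hT2def, qinf_getD Q2 α2 L (x + j) hj, hBval, ← hqdef, show α2 + (x + j) = α2 + x + j by ring]
  have key : ∀ j, j ≤ 2 * (p + q) → A j = B j := by
    intro j hj
    have hxj : x + j < L := by omega
    have hnm := hfree (x + j) (by omega) (by omega)
    rw [hM, Finset.mem_union] at hnm
    push_neg at hnm
    have f1 : S.getD (x + j) default = T1.getD (x + j) default :=
      notMem_mis (by omega) (by omega) hnm.1
    have f2 : S.getD (x + j) default = T2.getD (x + j) default :=
      notMem_mis (by omega) (by omega) hnm.2
    rw [hAT j hxj, hBT j hxj, ← f1, ← f2]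
  have hPerAp : ∀ n, Per A p n := by
    intro n i _
    rw [hAval, hAval, show α1 + x + (i + p) = (α1 + x + i) + p by ring, Nat.add_mod_right]
  have hPerBq : ∀ n, Per B q n := by
    intro n i _
    rw [hBval, hBval, show α2 + x + (i + q) = (α2 + x + i) + q by ring, Nat.add_mod_right]
  have hPerAq : Per A q (2 * (p + q)) := by
    intro i hi
    rw [key _ (by omega), key _ (by omega)]
    exact hPerBq (2 * (p + q)) i hi
  have hPerBp : Per B p (2 * (p + q)) := by
    intro i hi
    rw [← key _ (by omega), ← key _ (by omega)]
    exact hPerAp (2 * (p + q)) i hi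
  set g := Nat.gcd p q with hgdef
  have hgpos : 0 < g := Nat.gcd_pos_of_pos_left _ hp
  have hPerAg : Per A g ((p + q) + 2 * g) :=
    fine_wilf_aux (p + q) p q (p + q) A le_rfl hp hq (hPerAp _)
      (by rw [show p + q + p + q = 2 * (p + q) by ring]; exact hPerAq)
  have hPerBg : Per B g ((q + p) + 2 * g) := by
    have := fine_wilf_aux (q + p) q p (q + p) B le_rfl hq hp (hPerBq _)
      (by rw [show q + p + q + p = 2 * (p + q) by ring]; exact hPerBp)
    rwa [Nat.gcd_comm q p, ← hgdef] at this
  have hpg : p = g :=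
    rot_periodic_prim Q1 hQ1 (α1 + x) g hgpos (hgdef ▸ Nat.gcd_dvd_left p q)
      (hPerAg.mono (by omega))
  have hqg : q = g :=
    rot_periodic_prim Q2 hQ2 (α2 + x) g hgpos (hgdef ▸ Nat.gcd_dvd_right p q)
      (hPerBg.mono (by omega))
  have hpq : p = q := by omega
  set a1 := (α1 + x) % p with ha1def
  set a2 := (α2 + x) % q with ha2def
  have hrot : Q1.rotate a1 = Q2.rotate a2 := by
    apply List.ext_getElem (by simp [← hpdef, ← hqdef, hpq])
    intro n h1' h2'
    have hn : n < p := by simpa [← hpdef] using h1'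
    have hn2 : n < q := by omega
    have g1 : (Q1.rotate a1)[n] = Q1.getD ((n + a1) % p) default := by
      rw [List.getElem_rotate]
      rw [List.getD_eq_getElem Q1 default (Nat.mod_lt _ hp)]
    have g2 : (Q2.rotate a2)[n] = Q2.getD ((n + a2) % q) default := by
      rw [List.getElem_rotate]
      rw [List.getD_eq_getElem Q2 default (Nat.mod_lt _ hq)]
    rw [g1, g2]
    have m1 : (n + a1) % p = (α1 + x + n) % p := by
      rw [ha1def, Nat.add_mod_mod, Nat.add_comm n (α1 + x)]
    have m2 : (n + a2) % q = (α2 + x + n) % q := by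
      rw [ha2def, Nat.add_mod_mod, Nat.add_comm n (α2 + x)]
    rw [m1, m2, ← hAval, ← hBval]
    exact key n (by omega)
  have hR : Q1.IsRotated Q2 :=
    List.IsRotated.trans ⟨a1, hrot⟩ (List.IsRotated.symm ⟨a2, rfl⟩)
  obtain ⟨n, hn⟩ := hR
  have hm : n % Q1.length < Q1.length := Nat.mod_lt _ hp
  have hrm : Q1.rotate (n % Q1.length) = Q2 := by rw [List.rotate_mod]; exact hn
  exact ⟨Q1.take (n % Q1.length), Q1.drop (n % Q1.length),
    (List.take_append_drop _ Q1).symm,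
    by rw [← hrm, List.rotate_eq_drop_append_take (le_of_lt hm)]⟩
end

section
/- Let k ≥ 1 be an integer, Q a primitive string, and ℓ a positive integer with 100k·|Q| ≤ ℓ. Let T be a string with |T| ≤ 1.5ℓ, and let P and P' be strings with ℓ ≤ |P| ≤ |T| and ℓ ≤ |P'| ≤ |T|. Suppose Q is a 2k-period (with some offset) of P and also a 2k-period (with some offset) of P', that δ_H(P, T[0..|P|)) ≤ k, and that δ_H(P', T[|T|−|P'|..|T|)) ≤ k. Then Q is a 6k-period of T; that is, there exists a nonnegative integer β with δ_H(T, Q^∞[β..β+|T|)) ≤ 6k. -/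
/-! The triangle inequality turns the hypotheses into `3k`-mismatch approximations of the
prefix `T[0..|P|)` by `Q^∞[a..]` and of the suffix `T[s..|T|)` by `Q^∞[a'..]`, where
`s = |T| - |P'|`. They overlap on `T[s..|P|)`, of length at least `ℓ/2 ≥ 50k|Q|`. A primitive
`Q` differs from all its nontrivial rotations (a rotation by `d` fixing `Q` makes `gcd d |Q|` a
period, and `Q` a proper power), so if `a + s ≢ a' (mod |Q|)` the strings `Q^∞[a+s..]` and
`Q^∞[a'..]` differ once in every `|Q|` consecutive positions: more than `6k` times on the
overlap, contradicting the triangle inequality. So both approximations come from the same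
`Q^∞[a..]`, which has at most `3k + 3k` mismatches with `T`. -/

open Finset

theorem Function.Periodic.nat_gcd {α : Type*} {f : ℕ → α} {m n : ℕ}
    (hm : Function.Periodic f m) (hn : Function.Periodic f n) : Function.Periodic f (m.gcd n) := by
  induction m, n using Nat.gcd.induction with
  | H0 n => simpa using hn
  | H1 m n _ ih =>
    rw [Nat.gcd_rec]
    refine ih (fun x => ?_) hm
    rw [← hm.nat_mul (n / m) (x + n % m), Nat.cast_id, add_assoc, Nat.mod_add_div']
    exact hn x

section Fragments

variable {α : Type*}

theorem length_frag {S : List α} {x L : ℕ} (h : x + L ≤ S.length) :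
    (frag S x L).length = L := by
  simp [frag]; omega

theorem getD_frag [Inhabited α] (S : List α) {x L i : ℕ} (h : i < L) :
    (frag S x L).getD i default = S.getD (x + i) default := by
  simp [frag, List.getD_eq_getElem?_getD, h]

theorem frag_frag (S : List α) {x y L M : ℕ} (h : y + M ≤ L) :
    frag (frag S x L) y M = frag S (x + y) M := by
  simp [frag, List.drop_take, List.take_take, List.drop_drop]
  omega

end Fragments

section Hamming

variable {α : Type*} [DecidableEq α] [Inhabited α]

theorem hdist_comm (X Y : List α) : hdist X Y = hdist Y X := by
  simp only [hdist, mis, min_comm, ne_comm]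

theorem hdist_eq_card_filter {X Y : List α} (h : X.length = Y.length) :
    hdist X Y = #{i ∈ range X.length | X.getD i default ≠ Y.getD i default} := by
  rw [hdist, mis, h, min_self]

theorem hdist_triangle {X Y Z : List α} (hXY : X.length = Y.length) (hYZ : Y.length = Z.length) :
    hdist X Z ≤ hdist X Y + hdist Y Z := by
  rw [hdist_eq_card_filter hXY, hdist_eq_card_filter hYZ, hdist_eq_card_filter (hXY.trans hYZ),
    hXY]
  refine (card_le_card fun i => ?_).trans (card_union_le _ _)
  simp only [mem_filter, mem_union]
  grind

theorem hdist_triangle_left {X Y Z : List α} (hXY : X.length = Y.length)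
    (hXZ : X.length = Z.length) : hdist Y Z ≤ hdist X Y + hdist X Z := by
  rw [hdist_comm X Y]
  exact hdist_triangle hXY.symm hXZ

theorem hdist_frag_eq_card_filter {X Y : List α} {x L : ℕ} (hX : x + L ≤ X.length)
    (hY : x + L ≤ Y.length) :
    hdist (frag X x L) (frag Y x L) =
      #{i ∈ Ico x (x + L) | X.getD i default ≠ Y.getD i default} := by
  have hIco : Ico x (x + L) = (range L).map (addLeftEmbedding x) := by
    rw [range_eq_Ico, map_add_left_Ico, add_zero]
  rw [hdist_eq_card_filter ((length_frag hX).trans (length_frag hY).symm), length_frag hX, hIco,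
    filter_map, card_map]
  refine congrArg card (filter_congr fun i hi => ?_)
  rw [getD_frag _ (mem_range.1 hi), getD_frag _ (mem_range.1 hi)]
  rfl

theorem hdist_frag_le {X Y : List α} {x L : ℕ} (hX : x + L ≤ X.length)
    (hXY : X.length = Y.length) : hdist (frag X x L) (frag Y x L) ≤ hdist X Y := by
  rw [hdist_frag_eq_card_filter hX (hXY ▸ hX), hdist_eq_card_filter hXY, range_eq_Ico]
  exact card_le_card (filter_subset_filter _ (Ico_subset_Ico (Nat.zero_le x) hX))

theorem hdist_le_add_of_cover {X Y : List α} {s p : ℕ} (hsp : s ≤ p) (hp : p ≤ X.length)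
    (hXY : X.length = Y.length) :
    hdist X Y ≤ hdist (frag X 0 p) (frag Y 0 p)
      + hdist (frag X s (X.length - s)) (frag Y s (X.length - s)) := by
  rw [hdist_eq_card_filter hXY, hdist_frag_eq_card_filter (by omega) (by omega),
    hdist_frag_eq_card_filter (by omega) (by omega), range_eq_Ico]
  refine (card_le_card ?_).trans (card_union_le _ _)
  rw [← filter_union]
  refine filter_subset_filter _ fun i hi => ?_
  simp only [mem_union, mem_Ico] at hi ⊢
  omega

end Hamming

section Periodicity

variable {α : Type*} [Inhabited α]

/-- `periodicExt Q` is the infinite power `Q^∞`, read as a function `ℕ → α`. -/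
def periodicExt (Q : List α) (i : ℕ) : α := Q.getD (i % Q.length) default

theorem periodicExt_congr (Q : List α) {a b : ℕ} (h : a ≡ b [MOD Q.length]) :
    periodicExt Q a = periodicExt Q b :=
  congrArg (Q.getD · default) h

theorem periodic_periodicExt (Q : List α) : Function.Periodic (periodicExt Q) Q.length :=
  fun i => by simp [periodicExt]

@[simp] theorem length_qinf (Q : List α) (a L : ℕ) : (qinf Q a L).length = L := by
  simp [qinf]

theorem getD_qinf (Q : List α) {a L i : ℕ} (h : i < L) :
    (qinf Q a L).getD i default = periodicExt Q (a + i) := by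
  simp [qinf, periodicExt, List.getD_eq_getElem?_getD, h]

theorem frag_qinf (Q : List α) {a n x L : ℕ} (h : x + L ≤ n) :
    frag (qinf Q a n) x L = qinf Q (a + x) L := by
  refine List.ext_getElem (by simp [length_frag, h]) fun i _ _ => ?_
  simp [frag, qinf, add_assoc]

theorem qinf_congr (Q : List α) {a b : ℕ} (h : a ≡ b [MOD Q.length]) (L : ℕ) :
    qinf Q a L = qinf Q b L := by
  simp only [qinf]
  exact List.map_congr_left fun i _ => periodicExt_congr Q (h.add_right i)

theorem hdist_frag_qinf_le [DecidableEq α] (Q : List α) {X : List α} {a x L : ℕ}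
    (h : x + L ≤ X.length) :
    hdist (frag X x L) (qinf Q (a + x) L) ≤ hdist X (qinf Q a X.length) := by
  rw [← frag_qinf Q h]
  exact hdist_frag_le h (length_qinf Q a _).symm

end Periodicity

theorem Primitive.length_pos {α : Type*} {Q : List α} (hQ : Primitive Q) : 0 < Q.length :=
  List.length_pos_iff.2 hQ.1

section Primitive

variable {α : Type*} [Inhabited α] {Q : List α}

theorem List.eq_flatten_replicate_of_getD {X Y : List α} {m : ℕ} (hlen : X.length = m * Y.length)
    (hget : ∀ i < X.length, X.getD i default = Y.getD (i % Y.length) default) :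
    X = (List.replicate m Y).flatten := by
  induction m generalizing X with
  | zero => simpa using hlen
  | succ m ih =>
    have hYX : Y.length ≤ X.length := by rw [hlen, Nat.succ_mul]; omega
    rw [← X.take_append_drop Y.length, List.replicate_succ, List.flatten_cons]
    congr 1
    · refine List.ext_getElem (by simpa using hYX) fun i _ h₂ => ?_
      have := hget i (by omega)
      rw [Nat.mod_eq_of_lt h₂, List.getD_eq_getElem _ _ (by omega), List.getD_eq_getElem _ _ h₂]
        at this
      simpa using this
    · refine ih (by simp [hlen, Nat.succ_mul]) fun i hi => ?_
      rw [List.length_drop] at hi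
      have := hget (Y.length + i) (by omega)
      rw [Nat.add_mod_left] at this
      simpa [List.getD_eq_getElem?_getD] using this

theorem Primitive.dvd_of_periodic (hQ : Primitive Q) {d : ℕ}
    (hd : Function.Periodic (periodicExt Q) d) : Q.length ∣ d := by
  have hq : 0 < Q.length := hQ.length_pos
  set g := d.gcd Q.length
  have hg : Function.Periodic (periodicExt Q) g := hd.nat_gcd (periodic_periodicExt Q)
  have hgq : g ∣ Q.length := Nat.gcd_dvd_right d Q.length
  have hg0 : 0 < g := Nat.gcd_pos_of_pos_right d hq
  by_contra hqd
  have hglt : g < Q.length := by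
    refine (Nat.le_of_dvd hq hgq).lt_of_ne fun h => hqd ?_
    rw [← h]
    exact Nat.gcd_dvd_left d Q.length
  refine hQ.2 (Q.take g) (Q.length / g) ?_ (List.eq_flatten_replicate_of_getD ?_ fun i hi => ?_)
  · obtain ⟨c, hc⟩ := hgq
    rw [hc, Nat.mul_div_cancel_left c hg0]
    by_contra! hc1
    interval_cases c <;> omega
  · rw [List.length_take_of_le hglt.le, Nat.div_mul_cancel hgq]
  · have hig : i % g < g := Nat.mod_lt i hg0
    have := hg.map_mod_nat i
    rw [periodicExt, periodicExt, Nat.mod_eq_of_lt hi, Nat.mod_eq_of_lt (hig.trans hglt)] at this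
    rw [← this, List.length_take_of_le hglt.le]
    simp [List.getD_eq_getElem?_getD, hig]

theorem Primitive.modEq_of_periodicExt_add_eq (hQ : Primitive Q) {b c : ℕ}
    (h : ∀ i, periodicExt Q (b + i) = periodicExt Q (c + i)) : b ≡ c [MOD Q.length] := by
  set q := Q.length
  have hbq : b % q < q := Nat.mod_lt b hQ.length_pos
  -- `c + (q - b % q) ≡ c - b` is a period, as `b + (q - b % q)` is a multiple of `q`
  have hb : b + (q - b % q) = (b / q + 1) * q := by
    have := Nat.div_add_mod b q
    rw [add_mul, one_mul, mul_comm]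
    omega
  have hper : Function.Periodic (periodicExt Q) (c + (q - b % q)) := fun x => by
    rw [show x + (c + (q - b % q)) = c + (x + (q - b % q)) by ring, ← h,
      show b + (x + (q - b % q)) = x + (b / q + 1) * q by omega]
    exact (periodic_periodicExt Q).nat_mul (b / q + 1) x
  have hc := Nat.modEq_zero_iff_dvd.2 (hQ.dvd_of_periodic hper)
  have hb' : b + (q - b % q) ≡ 0 [MOD q] :=
    Nat.modEq_zero_iff_dvd.2 ⟨b / q + 1, by rw [hb, mul_comm]⟩
  exact (Nat.ModEq.add_right_cancel' _ (hc.trans hb'.symm)).symm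

variable [DecidableEq α]

theorem div_length_le_hdist_qinf (hQ : Primitive Q) {b c : ℕ} (hbc : ¬b ≡ c [MOD Q.length])
    (L : ℕ) : L / Q.length ≤ hdist (qinf Q b L) (qinf Q c L) := by
  obtain ⟨r, hr⟩ : ∃ r, periodicExt Q (b + r) ≠ periodicExt Q (c + r) := by
    by_contra! h
    exact hbc (hQ.modEq_of_periodicExt_add_eq h)
  rw [hdist_eq_card_filter (by simp), length_qinf]
  calc L / Q.length ≤ #{i ∈ range L | i ≡ r [MOD Q.length]} := by
        rw [← Nat.count_eq_card_filter_range, Nat.count_modEq_card L hQ.length_pos]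
        exact Nat.le_add_right _ _
    _ ≤ #{i ∈ range L | (qinf Q b L).getD i default ≠ (qinf Q c L).getD i default} := by
        refine card_le_card (monotone_filter_right _ fun i hi hir => ?_)
        rwa [getD_qinf Q (mem_range.1 hi), getD_qinf Q (mem_range.1 hi),
          periodicExt_congr Q (hir.add_left b), periodicExt_congr Q (hir.add_left c)]

theorem Primitive.modEq_of_hdist_qinf_le (hQ : Primitive Q) {X : List α} {L b c d e : ℕ}
    (hX : X.length = L) (hb : hdist X (qinf Q b L) ≤ d) (hc : hdist X (qinf Q c L) ≤ e)
    (hlong : d + e < L / Q.length) : b ≡ c [MOD Q.length] := by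
  by_contra hbc
  have := hdist_triangle_left (X := X) (hX.trans (length_qinf Q b L).symm)
    (hX.trans (length_qinf Q c L).symm)
  have := div_length_le_hdist_qinf hQ hbc L
  omega

end Primitive

theorem stmt1_general {α : Type*} [DecidableEq α] [Inhabited α]
    (k ℓ : ℕ) (hk : 1 ≤ k)
    (Q T P P' : List α) (hQprim : Primitive Q) (hQℓ : 100 * k * Q.length ≤ ℓ)
    (hT : 2 * T.length ≤ 3 * ℓ)
    (hPl : ℓ ≤ P.length) (hPu : P.length ≤ T.length)
    (hP'l : ℓ ≤ P'.length) (hP'u : P'.length ≤ T.length)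
    (hPper : ∃ a : ℕ, hdist P (qinf Q a P.length) ≤ 2 * k)
    (hP'per : ∃ a : ℕ, hdist P' (qinf Q a P'.length) ≤ 2 * k)
    (hpre : hdist P (frag T 0 P.length) ≤ k)
    (hsuf : hdist P' (frag T (T.length - P'.length) P'.length) ≤ k) :
    ∃ β : ℕ, hdist T (qinf Q β T.length) ≤ 6 * k := by
  obtain ⟨a, hPa⟩ := hPper
  obtain ⟨a', hP'a'⟩ := hP'per
  set s := T.length - P'.length
  have hpre_len : (frag T 0 P.length).length = P.length := length_frag (by omega)
  have hsuf_len : (frag T s P'.length).length = P'.length := length_frag (by omega)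
  have hA : hdist (frag T 0 P.length) (qinf Q a P.length) ≤ 3 * k := by
    have := hdist_triangle_left hpre_len.symm (length_qinf Q a _).symm
    omega
  have hB : hdist (frag T s P'.length) (qinf Q a' P'.length) ≤ 3 * k := by
    have := hdist_triangle_left hsuf_len.symm (length_qinf Q a' _).symm
    omega
  have hA' := hdist_frag_qinf_le Q (X := frag T 0 P.length) (a := a) (x := s)
    (L := P.length - s) (by omega)
  have hB' := hdist_frag_qinf_le Q (X := frag T s P'.length) (a := a') (x := 0)
    (L := P.length - s) (by omega)
  rw [frag_frag _ (by omega), zero_add, hpre_len] at hA'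
  rw [frag_frag _ (by omega), add_zero, add_zero, hsuf_len] at hB'
  have hlong : 3 * k + 3 * k < (P.length - s) / Q.length := by
    rw [Nat.lt_iff_add_one_le, Nat.le_div_iff_mul_le hQprim.length_pos]
    have hkq : Q.length ≤ k * Q.length := Nat.le_mul_of_pos_left _ hk
    rw [mul_assoc] at hQℓ
    rw [add_mul, one_mul, add_mul, mul_assoc]
    omega
  have hoff : a + s ≡ a' [MOD Q.length] :=
    hQprim.modEq_of_hdist_qinf_le (length_frag (by omega)) (hA'.trans hA) (hB'.trans hB) hlong
  refine ⟨a, ?_⟩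
  have hcover := hdist_le_add_of_cover (Y := qinf Q a T.length) (s := s) (by omega) hPu (by simp)
  rw [frag_qinf _ (by omega), frag_qinf _ (by omega), show T.length - s = P'.length by omega,
    add_zero, qinf_congr Q hoff] at hcover
  omega

/-- If `Q` is primitive with `100k·|Q| ≤ ℓ`, `|T| ≤ 1.5ℓ`, `P` (resp. `P'`) of length in
`[ℓ,|T|]` has `Q` as a `2k`-period and is a `k`-mismatch prefix (resp. suffix) of `T`,
then `Q` is a `6k`-period of `T`. -/
theorem stmt1 {α : Type*} [DecidableEq α] [Inhabited α]
    (k ℓ : ℕ) (hk : 1 ≤ k) (hℓ : 0 < ℓ)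
    (Q T P P' : List α) (hQprim : Primitive Q) (hQℓ : 100 * k * Q.length ≤ ℓ)
    (hT : 2 * T.length ≤ 3 * ℓ)
    (hPl : ℓ ≤ P.length) (hPu : P.length ≤ T.length)
    (hP'l : ℓ ≤ P'.length) (hP'u : P'.length ≤ T.length)
    (hPper : ∃ a : ℕ, hdist P (qinf Q a P.length) ≤ 2 * k)
    (hP'per : ∃ a : ℕ, hdist P' (qinf Q a P'.length) ≤ 2 * k)
    (hpre : hdist P (frag T 0 P.length) ≤ k)
    (hsuf : hdist P' (frag T (T.length - P'.length) P'.length) ≤ k) :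
    ∃ β : ℕ, hdist T (qinf Q β T.length) ≤ 6 * k :=
  stmt1_general k ℓ hk Q T P P' hQprim hQℓ hT hPl hPu hP'l hP'u hPper hP'per hpre hsuf
end

section
/- Let Q be a primitive string of length q, and let x and y be nonnegative integers with x ≢ y (mod q). Then for every integer L ≥ 0, δ_H(Q^∞[x..x+L), Q^∞[y..y+L)) ≥ ⌊L/q⌋. -/
open Function

theorem iterate_shift {α : Type*} (f : ℕ → α) (d : ℕ) :
    (fun g : ℕ → α => fun n => g (n + 1))^[d] f = fun n => f (n + d) := by
  induction d with
  | zero => rfl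
  | succ d ih =>
    rw [iterate_succ_apply', ih]
    funext n
    simp only [add_right_comm n 1 d, add_assoc]

namespace Function.Periodic

variable {α : Type*} {f : ℕ → α}

/-- Periods of `f` are the periods of the point `f` under the shift `g ↦ g (· + 1)`, so they are
closed under `gcd`. -/
theorem gcd {m n : ℕ} (hm : Periodic f m) (hn : Periodic f n) : Periodic f (m.gcd n) := by
  have shift_periodic : ∀ {d}, Periodic f d →
      IsPeriodicPt (fun g : ℕ → α => fun n => g (n + 1)) d f := fun hd => by
    simp only [IsPeriodicPt, IsFixedPt, iterate_shift]
    exact funext hd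
  have h := (shift_periodic hm).gcd (shift_periodic hn)
  rw [IsPeriodicPt, IsFixedPt, iterate_shift] at h
  exact fun k => congrFun h k

theorem of_eventually {q d x : ℕ} (hq : Periodic f q) (hq0 : 0 < q)
    (h : ∀ m, x ≤ m → f (m + d) = f m) : Periodic f d := fun n => by
  have hx : x ≤ n + x * q := le_add_left (Nat.le_mul_of_pos_right x hq0)
  have hxq := hq.nat_mul x
  simp only [Nat.cast_id] at hxq
  rw [← hxq n, ← h _ hx, ← hxq (n + d), add_right_comm]

end Function.Periodic

theorem List.flatten_replicate_map_range {α : Type*} {g : ℕ → α} {p : ℕ} (hp : Periodic g p)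
    (h : ℕ) : (List.replicate h ((List.range p).map g)).flatten = (List.range (h * p)).map g := by
  induction h with
  | zero => simp
  | succ k ih =>
    rw [List.replicate_succ, List.flatten_cons, ih, add_one_mul, add_comm, List.range_add,
      List.map_append, List.map_map]
    congr 1
    refine List.map_congr_left fun a _ => ?_
    simp only [comp_apply, add_comm p]
    exact (hp a).symm

section InfPow

variable {α : Type*} [Inhabited α]

/-- `infPow Q n` is the character `Q^∞[n]`. -/
def infPow (Q : List α) (n : ℕ) : α := Q.getD (n % Q.length) default

theorem infPow_periodic (Q : List α) : Periodic (infPow Q) Q.length := fun n => by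
  simp [infPow]

theorem infPow_add_mul_length (Q : List α) (n k : ℕ) :
    infPow Q (n + k * Q.length) = infPow Q n := by
  simp [infPow]

theorem map_infPow_range (Q : List α) : (List.range Q.length).map (infPow Q) = Q := by
  refine List.ext_getElem (by simp) fun i hi _ => ?_
  simp only [List.getElem_map, List.getElem_range, infPow]
  rw [Nat.mod_eq_of_lt (by simpa using hi), List.getD_eq_getElem]

theorem Primitive.length_dvd_of_periodic {Q : List α} (hQ : Primitive Q) {p : ℕ}
    (hp : Periodic (infPow Q) p) : Q.length ∣ p := by
  have hq0 : 0 < Q.length := List.length_pos_iff.mpr hQ.1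
  set r := p.gcd Q.length
  have hr : Periodic (infPow Q) r := hp.gcd (infPow_periodic Q)
  have hrq : r ∣ Q.length := Nat.gcd_dvd_right p Q.length
  have hr0 : 0 < r := Nat.gcd_pos_of_pos_right p hq0
  by_contra hndvd
  have hrlt : r < Q.length :=
    (Nat.le_of_dvd hq0 hrq).lt_of_ne fun hr => hndvd (hr ▸ Nat.gcd_dvd_left p Q.length)
  have hcopies : 2 ≤ Q.length / r := by
    obtain ⟨c, hc⟩ := hrq
    rw [hc, Nat.mul_div_cancel_left c hr0]
    rw [hc] at hrlt
    by_contra! hc2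
    interval_cases c <;> simp at hrlt
  apply hQ.2 _ _ hcopies
  rw [List.flatten_replicate_map_range hr, Nat.div_mul_cancel hrq, map_infPow_range]

theorem Primitive.modEq_of_infPow_add_eq {Q : List α} (hQ : Primitive Q) {x y : ℕ}
    (h : ∀ j, infPow Q (x + j) = infPow Q (y + j)) : x ≡ y [MOD Q.length] := by
  wlog hxy : x ≤ y generalizing x y
  · exact (this (fun j => (h j).symm) (le_of_not_ge hxy)).symm
  have hq0 : 0 < Q.length := List.length_pos_iff.mpr hQ.1
  refine (Nat.modEq_iff_dvd' hxy).mpr (hQ.length_dvd_of_periodic ?_)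
  refine (infPow_periodic Q).of_eventually (x := x) hq0 fun m hm => ?_
  have := h (m - x)
  rwa [Nat.add_sub_cancel' hm, show y + (m - x) = m + (y - x) by omega, eq_comm] at this

theorem Primitive.exists_mismatch {Q : List α} (hQ : Primitive Q) {x y : ℕ}
    (hxy : ¬ x ≡ y [MOD Q.length]) :
    ∃ j < Q.length, infPow Q (x + j) ≠ infPow Q (y + j) := by
  by_contra! h
  refine hxy (hQ.modEq_of_infPow_add_eq fun j => ?_)
  have hq0 : 0 < Q.length := List.length_pos_iff.mpr hQ.1
  simpa [infPow, Nat.add_mod_mod] using h (j % Q.length) (Nat.mod_lt _ hq0)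

theorem mem_mis_qinf [DecidableEq α] {Q : List α} {a b L i : ℕ} :
    i ∈ mis (qinf Q a L) (qinf Q b L) ↔ i < L ∧ infPow Q (a + i) ≠ infPow Q (b + i) := by
  simp only [mis, Finset.mem_filter, Finset.mem_range, qinf, List.length_map, List.length_range,
    min_self, and_congr_right_iff]
  intro hi
  rw [List.getD_eq_getElem _ _ (by simpa using hi), List.getD_eq_getElem _ _ (by simpa using hi)]
  simp [infPow]

end InfPow

/-- For a primitive string `Q` of length `q` and offsets `x ≢ y (mod q)`, the infinite powers
shifted by `x` and by `y` differ in at least `⌊L/q⌋` of their first `L` positions. -/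
theorem stmt3 {α : Type*} [DecidableEq α] [Inhabited α]
    (Q : List α) (q : ℕ) (hq : Q.length = q) (hQprim : Primitive Q)
    (x y : ℕ) (hxy : x % q ≠ y % q) (L : ℕ) :
    L / q ≤ hdist (qinf Q x L) (qinf Q y L) := by
  subst hq
  obtain ⟨j, hj, hmis⟩ := hQprim.exists_mismatch hxy
  have hblock : ∀ k < L / Q.length, k * Q.length + j ∈ mis (qinf Q x L) (qinf Q y L) := by
    intro k hk
    refine mem_mis_qinf.mpr ⟨?_, ?_⟩
    · calc k * Q.length + j < (k + 1) * Q.length := by rw [add_one_mul]; omega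
        _ ≤ L / Q.length * Q.length := Nat.mul_le_mul_right _ hk
        _ ≤ L := Nat.div_mul_le_self L _
    · rwa [← add_assoc, ← add_assoc, add_right_comm x, add_right_comm y, infPow_add_mul_length,
        infPow_add_mul_length]
  calc L / Q.length = (Finset.range (L / Q.length)).card := (Finset.card_range _).symm
    _ ≤ hdist (qinf Q x L) (qinf Q y L) :=
      Finset.card_le_card_of_injOn (fun k => k * Q.length + j)
        (fun k hk => hblock k (Finset.mem_range.mp hk))
        (fun a _ b _ hab => Nat.eq_of_mul_eq_mul_right (by omega) (Nat.add_right_cancel hab))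
end
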